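/- Let p_t(y) = (2πt)^{−1/2} e^{−y²/(2t)} for t > 0, y ∈ ℝ, and define Q and V as follows: Q((s,x),(t,y)) = ∫₀^{s∧t} p_{s+t−2r}(x − y) dr, and V(s,t,x,y) = Q((s,x),(s,x)) + Q((t,x),(t,x)) + Q((s,y),(s,y)) + Q((t,y),(t,y)) − 2Q((s,x),(t,x)) − 2Q((s,x),(s,y)) + 2Q((s,x),(t,y)) + 2Q((t,x),(s,y)) − 2Q((t,x),(t,y)) − 2Q((s,y),(t,y)). Then for all s, t > 0 and x, y ∈ ℝ: (i) V(s,t,x,y) ≤ 2∫₀^{|s−t|} [p_r(0) − p_r(x−y)] dr, and (ii) for every α ∈ [0, 1/2] there exists a constant c_α < ∞ (independent of s, t, x, y) such that V(s,t,x,y) ≤ c_α |x − y|^{2α} |s − t|^{1/2 − α}. -/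

import Mathlib

open MeasureTheory Set

/-- One-dimensional heat kernel `p_t(y) = (2πt)^{−1/2} e^{−y²/(2t)}`. -/
noncomputable def heatK (t y : ℝ) : ℝ :=
  (Real.sqrt (2 * Real.pi * t))⁻¹ * Real.exp (-y ^ 2 / (2 * t))

/-- Covariance `Q((s,x),(t,y)) = ∫₀^{s∧t} p_{s+t−2r}(x−y) dr` of the mild solution of
the stochastic heat equation with additive space-time white noise. -/
noncomputable def heatQ (s x t y : ℝ) : ℝ :=
  ∫ r in Set.Ioc (0:ℝ) (min s t), heatK (s + t - 2 * r) (x - y)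

/-- Second moment `V(s,t,x,y) = E[(u(t,y) − u(t,x) − u(s,y) + u(s,x))²]` of the
rectangular increment, expressed through the covariance `Q`. -/
noncomputable def heatV (s t x y : ℝ) : ℝ :=
  heatQ s x s x + heatQ t x t x + heatQ s y s y + heatQ t y t y
    - 2 * heatQ s x t x - 2 * heatQ s x s y + 2 * heatQ s x t y
    + 2 * heatQ t x s y - 2 * heatQ t x t y - 2 * heatQ s y t y

/-!
Each covariance is half an integral of the heat kernel,
`Q((s,x),(t,y)) = ½ ∫_{|s-t|}^{s+t} p_u(x-y) du`, so with `D(u) = p_u(0) - p_u(x-y)` and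
`F(b) = ∫_0^b D` one gets `V = F(2s) + F(2t) - 2 F(s+t) + 2 F(|s-t|)`.
Since `D(u) = p_u(0) (1 - exp(-(x-y)²/(2u)))` is a product of two nonnegative decreasing
functions, `F` is concave, so `F(2s) + F(2t) ≤ 2 F(s+t)`, which gives (i).
For (ii), `F(τ) ≤ ∫_0^τ p_u(0) du ∝ √τ`; splitting at `u = (x-y)²/2` and using
`1 - e^{-z} ≤ z` on the tail also gives `F(τ) ∝ |x-y|`, and
`min(|x-y|, √τ) ≤ |x-y|^{2α} √τ^{1-2α}`.
-/

open intervalIntegral Real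

theorem integral_add_integral_le_two_mul_integral_midpoint {f : ℝ → ℝ} {c a b : ℝ}
    (hf : AntitoneOn f (uIcc a b)) (hca : IntervalIntegrable f volume c a) :
    (∫ u in c..a, f u) + ∫ u in c..b, f u ≤ 2 * ∫ u in c..(a + b) / 2, f u := by
  wlog hab : a ≤ b generalizing a b
  · rw [add_comm, add_comm a b, uIcc_comm] at *
    exact this hf (hca.trans hf.intervalIntegrable.symm) (le_of_not_ge hab)
  set m := (a + b) / 2 with hm_def
  set h := (b - a) / 2 with h_def
  have ham : m ∈ Icc a b := ⟨by linarith, by linarith⟩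
  rw [uIcc_of_le hab] at hf
  have hf_am : IntervalIntegrable f volume a m :=
    (hf.mono (by rw [uIcc_of_le ham.1]; exact Icc_subset_Icc_right ham.2)).intervalIntegrable
  have hf_mb : IntervalIntegrable f volume m b :=
    (hf.mono (by rw [uIcc_of_le ham.2]; exact Icc_subset_Icc_left ham.1)).intervalIntegrable
  -- `[m, b]` is `[a, m]` shifted right by `h`, and `f` decreases under the shift
  have hshift : ∫ u in a..m, f (u + h) ≤ ∫ u in a..m, f u := by
    have hf_shift := hf_mb.comp_add_right h
    rw [show m - h = a by linarith, show b - h = m by linarith] at hf_shift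
    refine integral_mono_on ham.1 hf_shift hf_am fun u hu => hf ?_ ?_ (by linarith)
    exacts [⟨hu.1, by linarith [hu.2]⟩, ⟨by linarith [hu.1], by linarith [hu.2]⟩]
  rw [integral_comp_add_right, show a + h = m by linarith, show m + h = b by linarith] at hshift
  have h1 := integral_add_adjacent_intervals hca hf_am
  have h2 := integral_add_adjacent_intervals (hca.trans hf_am) hf_mb
  linarith

theorem min_le_rpow_mul_rpow {a b θ : ℝ} (ha : 0 ≤ a) (hb : 0 ≤ b) (hθ₀ : 0 ≤ θ)
    (hθ₁ : θ ≤ 1) :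
    min a b ≤ a ^ θ * b ^ (1 - θ) := by
  have hm : 0 ≤ min a b := le_min ha hb
  calc min a b = min a b ^ θ * min a b ^ (1 - θ) := by
        rw [← rpow_add' hm (by norm_num), add_sub_cancel, rpow_one]
    _ ≤ a ^ θ * b ^ (1 - θ) :=
        mul_le_mul (rpow_le_rpow hm (min_le_left a b) hθ₀)
          (rpow_le_rpow hm (min_le_right a b) (sub_nonneg.2 hθ₁)) (by positivity) (by positivity)

theorem heatK_nonneg (t y : ℝ) : 0 ≤ heatK t y := by
  unfold heatK; positivity

theorem heatK_eq_heatK_zero_mul (t y : ℝ) : heatK t y = heatK t 0 * exp (-y ^ 2 / (2 * t)) := by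
  simp [heatK]

theorem heatK_zero_eq_rpow {t : ℝ} (ht : 0 ≤ t) :
    heatK t 0 = (√(2 * π))⁻¹ * t ^ (-(1 / 2) : ℝ) := by
  rw [heatK, sqrt_mul (by positivity), sqrt_eq_rpow t, mul_inv, ← rpow_neg ht]
  norm_num

theorem heatK_le_heatK_zero {t : ℝ} (ht : 0 ≤ t) (y : ℝ) : heatK t y ≤ heatK t 0 := by
  rw [heatK_eq_heatK_zero_mul]
  refine mul_le_of_le_one_right (heatK_nonneg t 0) (exp_le_one_iff.2 ?_)
  exact div_nonpos_of_nonpos_of_nonneg (by nlinarith) (by positivity)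

theorem integral_heatK_zero {b : ℝ} (hb : 0 ≤ b) :
    ∫ u in (0 : ℝ)..b, heatK u 0 = (√(2 * π))⁻¹ * (2 * √b) := by
  rw [integral_congr fun u hu => heatK_zero_eq_rpow (by rw [uIcc_of_le hb] at hu; exact hu.1),
    intervalIntegral.integral_const_mul, integral_rpow (Or.inl (by norm_num)), sqrt_eq_rpow b]
  congr 1
  norm_num
  ring

theorem intervalIntegrable_heatK_zero {b : ℝ} (hb : 0 ≤ b) :
    IntervalIntegrable (heatK · 0) volume 0 b := by
  refine ((intervalIntegrable_rpow' (r := -(1 / 2)) (by norm_num)).const_mul _).congr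
    fun u hu => (heatK_zero_eq_rpow ?_).symm
  rw [uIoc_of_le hb] at hu
  exact hu.1.le

theorem intervalIntegrable_heatK (y : ℝ) {b : ℝ} (hb : 0 ≤ b) :
    IntervalIntegrable (heatK · y) volume 0 b := by
  refine (intervalIntegrable_heatK_zero hb).mono_fun (by unfold heatK; fun_prop) ?_
  filter_upwards [ae_restrict_mem measurableSet_uIoc] with u hu
  rw [uIoc_of_le hb] at hu
  simpa only [norm_of_nonneg (heatK_nonneg _ _)] using heatK_le_heatK_zero hu.1.le y

theorem heatK_zero_sub_heatK_eq (t y : ℝ) :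
    heatK t 0 - heatK t y = heatK t 0 * (1 - exp (-(y ^ 2 / (2 * t)))) := by
  rw [heatK_eq_heatK_zero_mul t y, neg_div]; ring

theorem antitoneOn_heatK_zero : AntitoneOn (heatK · 0) (Ioi 0) := by
  intro u hu v hv huv
  simp only [heatK_zero_eq_rpow (le_of_lt hu), heatK_zero_eq_rpow (le_of_lt hv)]
  exact mul_le_mul_of_nonneg_left (rpow_le_rpow_of_nonpos hu huv (by norm_num)) (by positivity)

theorem antitoneOn_heatK_zero_sub_heatK (y : ℝ) :
    AntitoneOn (fun t => heatK t 0 - heatK t y) (Ioi 0) := by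
  intro u (hu : 0 < u) v hv huv
  simp only [heatK_zero_sub_heatK_eq]
  refine mul_le_mul (antitoneOn_heatK_zero hu hv huv) ?_ ?_ (heatK_nonneg _ _)
  · gcongr 1 - exp (-?_)
    exact div_le_div_of_nonneg_left (sq_nonneg y) (by linarith) (by linarith)
  · simp only [sub_nonneg, exp_le_one_iff, neg_nonpos]
    exact div_nonneg (sq_nonneg y) (by linarith)

theorem heatK_zero_sub_heatK_le {t : ℝ} (ht : 0 < t) (y : ℝ) :
    heatK t 0 - heatK t y ≤ (√(2 * π))⁻¹ * (y ^ 2 / 2) * t ^ (-(3 / 2) : ℝ) := by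
  have h32 : t ^ (-(3 / 2) : ℝ) = t ^ (-(1 / 2) : ℝ) / t := by
    rw [show (-(3 / 2) : ℝ) = -(1 / 2) - 1 by norm_num, rpow_sub_one ht.ne']
  calc heatK t 0 - heatK t y = heatK t 0 * (1 - exp (-(y ^ 2 / (2 * t)))) :=
        heatK_zero_sub_heatK_eq t y
    _ ≤ heatK t 0 * (y ^ 2 / (2 * t)) := by
        gcongr
        · exact heatK_nonneg t 0
        · linarith [add_one_le_exp (-(y ^ 2 / (2 * t)))]
    _ = _ := by rw [heatK_zero_eq_rpow ht.le, h32]; field_simp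

theorem intervalIntegrable_heatK_zero_sub_heatK (y : ℝ) {b : ℝ} (hb : 0 ≤ b) :
    IntervalIntegrable (fun u => heatK u 0 - heatK u y) volume 0 b :=
  (intervalIntegrable_heatK_zero hb).sub (intervalIntegrable_heatK y hb)

theorem integral_heatK_zero_sub_heatK_le_sqrt (y : ℝ) {b : ℝ} (hb : 0 ≤ b) :
    ∫ u in (0 : ℝ)..b, (heatK u 0 - heatK u y) ≤ (√(2 * π))⁻¹ * (2 * √b) :=
  integral_heatK_zero hb ▸ integral_mono_on hb (intervalIntegrable_heatK_zero_sub_heatK y hb)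
    (intervalIntegrable_heatK_zero hb) fun u _ => sub_le_self _ (heatK_nonneg u y)

theorem integral_heatK_zero_sub_heatK_le_div_sqrt (y : ℝ) {a b : ℝ} (ha : 0 < a)
    (hab : a ≤ b) :
    ∫ u in a..b, (heatK u 0 - heatK u y) ≤ (√(2 * π))⁻¹ * (y ^ 2 / √a) := by
  have h0 : (0 : ℝ) ∉ uIcc a b := by rw [uIcc_of_le hab]; exact fun h => ha.not_ge h.1
  have hrpow : ∫ u in a..b, u ^ (-(3 / 2) : ℝ) ≤ 2 / √a := by
    rw [integral_rpow (Or.inr ⟨by norm_num, h0⟩), sqrt_eq_rpow, div_eq_mul_inv 2,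
      ← rpow_neg ha.le]
    have := rpow_nonneg (ha.le.trans hab) (-(3 / 2) + 1 : ℝ)
    norm_num at this ⊢
    linarith
  calc ∫ u in a..b, (heatK u 0 - heatK u y)
      ≤ ∫ u in a..b, (√(2 * π))⁻¹ * (y ^ 2 / 2) * u ^ (-(3 / 2) : ℝ) := by
        refine integral_mono_on hab ?_ ?_ fun u hu => heatK_zero_sub_heatK_le (ha.trans_le hu.1) y
        · refine ((antitoneOn_heatK_zero_sub_heatK y).mono fun u hu => ?_).intervalIntegrable
          rw [uIcc_of_le hab] at hu
          exact ha.trans_le hu.1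
        · exact (intervalIntegral.intervalIntegrable_rpow (Or.inr h0)).const_mul _
    _ = (√(2 * π))⁻¹ * (y ^ 2 / 2) * ∫ u in a..b, u ^ (-(3 / 2) : ℝ) :=
        intervalIntegral.integral_const_mul _ _
    _ ≤ (√(2 * π))⁻¹ * (y ^ 2 / 2) * (2 / √a) := by gcongr
    _ = (√(2 * π))⁻¹ * (y ^ 2 / √a) := by ring

theorem integral_heatK_zero_sub_heatK_le_abs (y : ℝ) {b : ℝ} (hb : 0 ≤ b) :
    ∫ u in (0 : ℝ)..b, (heatK u 0 - heatK u y) ≤ (√(2 * π))⁻¹ * (4 * |y|) := by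
  rcases eq_or_ne y 0 with rfl | hy
  · simp
  -- split at `a = y²/2`, where the bounds `√a` near `0` and `y²/√a` on the tail balance
  set a := y ^ 2 / 2 with ha_def
  have ha : 0 < a := by positivity
  have hsqrt_a : √a ≤ |y| := by
    rw [← sqrt_sq_eq_abs]
    exact sqrt_le_sqrt (by linarith [sq_nonneg y])
  rcases le_total b a with hba | hab
  · calc _ ≤ (√(2 * π))⁻¹ * (2 * √b) := integral_heatK_zero_sub_heatK_le_sqrt y hb
      _ ≤ (√(2 * π))⁻¹ * (4 * |y|) := by
        gcongr
        · norm_num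
        · exact (sqrt_le_sqrt hba).trans hsqrt_a
  · have h0a := intervalIntegrable_heatK_zero_sub_heatK y ha.le
    have htail : y ^ 2 / √a = 2 * √a := by
      rw [show y ^ 2 = 2 * a by rw [ha_def]; ring, mul_div_assoc, div_sqrt]
    rw [← integral_add_adjacent_intervals h0a
      (h0a.symm.trans (intervalIntegrable_heatK_zero_sub_heatK y hb))]
    calc _ ≤ (√(2 * π))⁻¹ * (2 * √a) + (√(2 * π))⁻¹ * (y ^ 2 / √a) :=
          add_le_add (integral_heatK_zero_sub_heatK_le_sqrt y ha.le)
            (integral_heatK_zero_sub_heatK_le_div_sqrt y ha hab)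
      _ ≤ (√(2 * π))⁻¹ * (4 * |y|) := by
        rw [htail, ← mul_add]
        gcongr
        linarith

theorem heatQ_eq_half_integral {s t : ℝ} (hs : 0 < s) (ht : 0 < t) (x y : ℝ) :
    heatQ s x t y = 2⁻¹ * ∫ u in |s - t|..s + t, heatK u (x - y) := by
  rw [heatQ, ← integral_of_le (le_min hs.le ht.le),
    integral_comp_sub_mul (fun u => heatK u (x - y)) two_ne_zero, smul_eq_mul]
  congr 2
  · rcases le_total s t with h | h
    · rw [min_eq_left h, abs_of_nonpos (by linarith)]; ring
    · rw [min_eq_right h, abs_of_nonneg (by linarith)]; ring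
  · ring

theorem heatV_eq {s t : ℝ} (hs : 0 < s) (ht : 0 < t) (x y : ℝ) :
    heatV s t x y = (∫ u in (0 : ℝ)..2 * s, (heatK u 0 - heatK u (x - y)))
      + (∫ u in (0 : ℝ)..2 * t, (heatK u 0 - heatK u (x - y)))
      - 2 * ∫ u in |s - t|..s + t, (heatK u 0 - heatK u (x - y)) := by
  have hst : |s - t| ≤ s + t := by rw [abs_le]; constructor <;> linarith
  have hK (z : ℝ) {a b : ℝ} (ha : 0 ≤ a) (hab : a ≤ b) :
      IntervalIntegrable (heatK · z) volume a b :=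
    (intervalIntegrable_heatK z ha).symm.trans (intervalIntegrable_heatK z (ha.trans hab))
  simp only [heatV, heatQ_eq_half_integral hs ht, heatQ_eq_half_integral ht hs,
    heatQ_eq_half_integral hs hs, heatQ_eq_half_integral ht ht, sub_self, abs_zero, ← two_mul,
    abs_sub_comm t s, add_comm t s]
  rw [integral_sub (hK 0 le_rfl (by linarith)) (hK _ le_rfl (by linarith)),
    integral_sub (hK 0 le_rfl (by linarith)) (hK _ le_rfl (by linarith)),
    integral_sub (hK 0 (abs_nonneg _) hst) (hK _ (abs_nonneg _) hst)]
  ring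

theorem heatV_le_two_mul_integral {s t : ℝ} (hs : 0 < s) (ht : 0 < t) (x y : ℝ) :
    heatV s t x y ≤ 2 * ∫ u in (0 : ℝ)..|s - t|, (heatK u 0 - heatK u (x - y)) := by
  have hpos : uIcc (2 * s) (2 * t) ⊆ Ioi 0 := fun u hu =>
    (lt_min (by linarith) (by linarith)).trans_le hu.1
  have hconcave := integral_add_integral_le_two_mul_integral_midpoint (c := 0)
    ((antitoneOn_heatK_zero_sub_heatK (x - y)).mono hpos)
    (intervalIntegrable_heatK_zero_sub_heatK (x - y) (b := 2 * s) (by linarith))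
  rw [show (2 * s + 2 * t) / 2 = s + t by ring] at hconcave
  rw [heatV_eq hs ht, ← integral_interval_sub_left
    (intervalIntegrable_heatK_zero_sub_heatK _ (by linarith))
    (intervalIntegrable_heatK_zero_sub_heatK _ (abs_nonneg _))]
  linarith

/-- **Bounds on the increment variance for the stochastic heat equation.**
(i) For all `s, t > 0` and `x, y`, `V(s,t,x,y) ≤ 2∫₀^{|s−t|} [p_r(0) − p_r(x−y)] dr`;
(ii) for every `α ∈ [0,1/2]` there is a constant `c_α` (independent of `s,t,x,y`)
with `V(s,t,x,y) ≤ c_α |x−y|^{2α} |s−t|^{1/2−α}`. -/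
theorem heatV_bounds :
    (∀ s t x y : ℝ, 0 < s → 0 < t →
      heatV s t x y ≤ 2 * ∫ r in Ioc (0:ℝ) (|s - t|), (heatK r 0 - heatK r (x - y))) ∧
    ∀ α : ℝ, α ∈ Icc (0:ℝ) (1/2) →
      ∃ c : ℝ, ∀ s t x y : ℝ, 0 < s → 0 < t →
        heatV s t x y ≤ c * |x - y| ^ (2 * α) * |s - t| ^ (1/2 - α) := by
  refine ⟨fun s t x y hs ht => ?_,
    fun α hα => ⟨8 * (√(2 * π))⁻¹, fun s t x y hs ht => ?_⟩⟩
  · rw [← integral_of_le (abs_nonneg _)]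
    exact heatV_le_two_mul_integral hs ht x y
  have hV := heatV_le_two_mul_integral hs ht x y
  have h_abs := integral_heatK_zero_sub_heatK_le_abs (x - y) (abs_nonneg (s - t))
  have h_sqrt := integral_heatK_zero_sub_heatK_le_sqrt (x - y) (abs_nonneg (s - t))
  have hc : 0 ≤ (√(2 * π))⁻¹ * √|s - t| := by positivity
  calc heatV s t x y ≤ 8 * (√(2 * π))⁻¹ * min |x - y| √|s - t| := by
        rw [mul_min_of_nonneg _ _ (by positivity)]
        exact le_min (by linarith) (by linarith)
    _ ≤ 8 * (√(2 * π))⁻¹ * (|x - y| ^ (2 * α) * √|s - t| ^ (1 - 2 * α)) := by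
        gcongr
        exact min_le_rpow_mul_rpow (abs_nonneg _) (sqrt_nonneg _) (by linarith [hα.1])
          (by linarith [hα.2])
    _ = 8 * (√(2 * π))⁻¹ * |x - y| ^ (2 * α) * |s - t| ^ (1 / 2 - α) := by
        rw [sqrt_eq_rpow |s - t|, ← rpow_mul (abs_nonneg _)]
        ring_nf
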